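/- arXiv:1101.2139 — 5 statements merged into one kernel-verified Lean document; each statement's English description precedes it below -/
import Mathlib

section
/- If four angles φ₁,...,φ₄ in ℝ/2πℤ have sum lying in T_b for b ∈ (0,π/2), then Σ_{a=1}^4 sin²(φ_a) ≥ sin²(b/8). -/
/-- `Tb b` : the set of angles (represented by real numbers, modulo `2π`) whose distance
to both `0` and `π` on the circle `ℝ/2πℤ` is at least `b`. -/
def Tb (b : ℝ) : Set ℝ := {θ : ℝ | ∀ n : ℤ, b ≤ |θ - n * Real.pi|}

lemma sin_sq_lower (c θ : ℝ) (hc0 : 0 < c) (hc : c ≤ Real.pi / 2)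
    (h : ∀ n : ℤ, c ≤ |θ - n * Real.pi|) : Real.sin c ^ 2 ≤ Real.sin θ ^ 2 := by
  set n : ℤ := round (θ / Real.pi)
  set δ : ℝ := θ - n * Real.pi with hδ
  have hpi := Real.pi_pos
  have hδle : |δ| ≤ Real.pi / 2 := by
    have := abs_sub_round (θ / Real.pi)
    have : |θ / Real.pi - n| * Real.pi ≤ (1 / 2) * Real.pi :=
      mul_le_mul_of_nonneg_right this hpi.le
    have hδeq : δ = (θ / Real.pi - n) * Real.pi := by rw [hδ]; field_simp
    calc |δ| = |θ / Real.pi - n| * Real.pi := by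
            rw [hδeq, abs_mul, abs_of_pos hpi]
      _ ≤ (1 / 2) * Real.pi := this
      _ = Real.pi / 2 := by ring
  have hcδ : c ≤ |δ| := h n
  have hsin : Real.sin θ ^ 2 = Real.sin δ ^ 2 := by
    have hd : Real.sin δ = (-1 : ℝ) ^ n * Real.sin θ := by rw [hδ, Real.sin_sub_int_mul_pi]
    rw [hd, mul_pow]
    rcases Int.even_or_odd n with he | ho
    · rw [he.neg_one_zpow]; ring
    · rw [Odd.neg_one_zpow ho]; ring
  rw [hsin]
  have h1 : Real.sin c ≤ Real.sin |δ| := by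
    apply Real.sin_le_sin_of_le_of_le_pi_div_two (by linarith) hδle hcδ
  have hdlo : -(Real.pi/2) ≤ δ := (abs_le.mp hδle).1
  have hdhi : δ ≤ Real.pi/2 := (abs_le.mp hδle).2
  have h2 : Real.sin |δ| = |Real.sin δ| := by
    rcases le_or_gt 0 δ with hp | hneg
    · rw [abs_of_nonneg hp,
        abs_of_nonneg (Real.sin_nonneg_of_nonneg_of_le_pi hp (by linarith))]
    · have : 0 ≤ Real.sin (-δ) :=
        Real.sin_nonneg_of_nonneg_of_le_pi (by linarith) (by linarith)
      rw [Real.sin_neg] at this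
      rw [abs_of_neg hneg, Real.sin_neg, abs_of_nonpos (by linarith)]
  have hc' : 0 ≤ Real.sin c := Real.sin_nonneg_of_nonneg_of_le_pi hc0.le (by linarith)
  calc Real.sin c ^ 2 ≤ |Real.sin δ| ^ 2 := by
        rw [← h2]; exact pow_le_pow_left₀ hc' h1 2
    _ = Real.sin δ ^ 2 := sq_abs _

/-- if `φ₁ + φ₂ + φ₃ + φ₄ ∈ T_b` with `b ∈ (0, π/2)`, then
`Σ_a sin²(φ_a) ≥ sin²(b/8)`. -/
theorem stmt3 (b : ℝ) (hb : b ∈ Set.Ioo 0 (Real.pi / 2)) (φ : Fin 4 → ℝ)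
    (hsum : (∑ a, φ a) ∈ Tb b) :
    Real.sin (b / 8) ^ 2 ≤ ∑ a, Real.sin (φ a) ^ 2 := by
  obtain ⟨hb0, hbπ⟩ := hb
  -- pigeonhole: some φ a is at distance ≥ b/4 from all multiples of π
  have key : ∃ a : Fin 4, ∀ n : ℤ, b / 4 ≤ |φ a - n * Real.pi| := by
    by_contra h
    push_neg at h
    choose n hn using h
    have hN := hsum (∑ a, n a)
    have : |(∑ a, φ a) - (∑ a, n a : ℤ) * Real.pi| < b := by
      have : (∑ a, φ a) - (∑ a, n a : ℤ) * Real.pi = ∑ a, (φ a - n a * Real.pi) := by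
        push_cast
        rw [Finset.sum_sub_distrib, ← Finset.sum_mul]
      rw [this]
      calc |∑ a, (φ a - n a * Real.pi)| ≤ ∑ a, |φ a - n a * Real.pi| :=
            Finset.abs_sum_le_sum_abs _ _
        _ < ∑ _a : Fin 4, (b / 4) := Finset.sum_lt_sum_of_nonempty ⟨0, by simp⟩ fun a _ => hn a
        _ = b := by simp; ring
    linarith
  obtain ⟨a, ha⟩ := key
  have h1 : Real.sin (b / 4) ^ 2 ≤ Real.sin (φ a) ^ 2 :=
    sin_sq_lower (b / 4) (φ a) (by linarith) (by linarith) ha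
  have h2 : Real.sin (b / 8) ^ 2 ≤ Real.sin (b / 4) ^ 2 := by
    have hm : Real.sin (b / 8) ≤ Real.sin (b / 4) :=
      Real.sin_le_sin_of_le_of_le_pi_div_two (by linarith) (by linarith) (by linarith)
    have : 0 ≤ Real.sin (b / 8) := Real.sin_nonneg_of_nonneg_of_le_pi (by linarith)
      (by linarith [Real.pi_pos])
    exact pow_le_pow_left₀ this hm 2
  have h3 : Real.sin (φ a) ^ 2 ≤ ∑ i, Real.sin (φ i) ^ 2 :=
    Finset.single_le_sum (f := fun i => Real.sin (φ i) ^ 2) (fun i _ => sq_nonneg _) (Finset.mem_univ a)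
  linarith
end

section
/- Small-neighbor estimate: let ψ be an eigenfunction of H_Λ(A) with eigenvalue E ∈ [0,4], x₀ a maximum point with |ψ(x₀)| = M, and suppose ỹ₀ ∈ Λ is a nearest neighbor of x₀ with |ψ(ỹ₀)| ≤ εM for some ε ≥ 0. Then every other nearest neighbor y ∈ Λ of x₀ satisfies |ψ(y)| ≥ (2 − E − ε) M. -/
open scoped Classical

/-- `x` and `y` are nearest neighbors in `ℤ²` (`|x - y| = 1`). -/
def edge (x y : ℤ × ℤ) : Prop := (x.1 - y.1) ^ 2 + (x.2 - y.2) ^ 2 = 1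

/-- The four nearest neighbors of a point of `ℤ²`. -/
def nbrs (x : ℤ × ℤ) : Finset (ℤ × ℤ) :=
  {x + (1, 0), x - (1, 0), x + (0, 1), x - (0, 1)}

/-- The finite-volume magnetic Schrödinger operator with simple boundary conditions:
`(H_Λ(A) ψ)(x) = 4 ψ(x) - Σ_{y ∈ Λ, |x-y|=1} e^{iA(x,y)} ψ(y)`. -/
noncomputable def Ham (Λ : Finset (ℤ × ℤ)) (A : ℤ × ℤ → ℤ × ℤ → ℝ)
    (ψ : ℤ × ℤ → ℂ) (x : ℤ × ℤ) : ℂ :=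
  4 * ψ x - ∑ y ∈ Λ.filter (fun y => edge x y), Complex.exp (Complex.I * (A x y)) * ψ y

/-- The current of a wavefunction `ψ` along the directed edge `(x,y)`:
`J_ψ(x,y) = -2 Re( conj(ψ x) · i e^{iA(x,y)} ψ y )`. -/
noncomputable def cur (A : ℤ × ℤ → ℤ × ℤ → ℝ) (ψ : ℤ × ℤ → ℂ) (x y : ℤ × ℤ) : ℝ :=
  -2 * ((starRingEnd ℂ) (ψ x) * Complex.I * Complex.exp (Complex.I * (A x y)) * ψ y).re

/-! Taking norms in the eigenvalue equation at `x₀` gives `(4 - E) M ≤ ∑_{z ∼ x₀} ‖ψ z‖`, since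
the phases have modulus one. Of the at most four neighbours, `y` contributes `‖ψ y‖`, `y₀'` at
most `ε M`, and the remaining two at most `M` each. -/

lemma edge_mem_nbrs {x y : ℤ × ℤ} (h : edge x y) : y ∈ nbrs x := by
  obtain ⟨x₁, x₂⟩ := x
  obtain ⟨y₁, y₂⟩ := y
  obtain ⟨a, rfl⟩ : ∃ a, x₁ = y₁ + a := ⟨x₁ - y₁, by ring⟩
  obtain ⟨b, rfl⟩ : ∃ b, x₂ = y₂ + b := ⟨x₂ - y₂, by ring⟩
  simp only [edge, add_sub_cancel_left] at h
  have ha : |a| ≤ 1 := (sq_le_one_iff_abs_le_one a).1 (by nlinarith [sq_nonneg b])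
  have hb : |b| ≤ 1 := (sq_le_one_iff_abs_le_one b).1 (by nlinarith [sq_nonneg a])
  obtain ⟨ha₁, ha₂⟩ := abs_le.1 ha
  obtain ⟨hb₁, hb₂⟩ := abs_le.1 hb
  simp only [nbrs, Finset.mem_insert, Finset.mem_singleton, Prod.ext_iff]
  interval_cases a <;> interval_cases b <;> simp_all

lemma card_filter_edge_le_four (Λ : Finset (ℤ × ℤ)) (x : ℤ × ℤ) :
    (Λ.filter (edge x)).card ≤ 4 :=
  (Finset.card_le_card fun _ hz => edge_mem_nbrs (Finset.mem_filter.1 hz).2).trans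
    Finset.card_le_four

lemma sum_le_add_add_mul_of_card_le {α : Type*} [DecidableEq α] {S : Finset α} {n : ℕ}
    {f : α → ℝ} {M : ℝ} {a b : α} (hS : S.card ≤ n + 2) (ha : a ∈ S) (hb : b ∈ S)
    (hab : a ≠ b) (hf : ∀ z ∈ S, f z ≤ M) (hM : 0 ≤ M) :
    ∑ z ∈ S, f z ≤ f a + f b + n * M := by
  have hb' : b ∈ S.erase a := Finset.mem_erase.2 ⟨hab.symm, hb⟩
  have hcard : ((S.erase a).erase b).card ≤ n := by
    rw [Finset.card_erase_of_mem hb', Finset.card_erase_of_mem ha]; omega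
  have hrest : ∑ z ∈ (S.erase a).erase b, f z ≤ n * M :=
    calc ∑ z ∈ (S.erase a).erase b, f z ≤ ((S.erase a).erase b).card • M :=
          Finset.sum_le_card_nsmul _ _ _ fun z hz =>
            hf z (Finset.mem_of_mem_erase (Finset.mem_of_mem_erase hz))
      _ ≤ n * M := by rw [nsmul_eq_mul]; gcongr
  rw [← Finset.add_sum_erase S f ha, ← Finset.add_sum_erase _ f hb']
  linarith

lemma sub_mul_norm_le_sum_norm_of_ham_eq {Λ : Finset (ℤ × ℤ)} {A : ℤ × ℤ → ℤ × ℤ → ℝ}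
    {ψ : ℤ × ℤ → ℂ} {E : ℝ} {x : ℤ × ℤ} (h : Ham Λ A ψ x = (E : ℂ) * ψ x) :
    (4 - E) * ‖ψ x‖ ≤ ∑ z ∈ Λ.filter (edge x), ‖ψ z‖ := by
  have hsum : ∑ z ∈ Λ.filter (edge x), Complex.exp (Complex.I * (A x z)) * ψ z
      = ((4 - E : ℝ) : ℂ) * ψ x := by
    rw [Ham] at h; push_cast; linear_combination -h
  calc (4 - E) * ‖ψ x‖ ≤ ‖((4 - E : ℝ) : ℂ) * ψ x‖ := by
        rw [norm_mul, Complex.norm_real, Real.norm_eq_abs]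
        exact mul_le_mul_of_nonneg_right (le_abs_self _) (norm_nonneg _)
    _ ≤ ∑ z ∈ Λ.filter (edge x), ‖ψ z‖ := by
        rw [← hsum]
        refine (norm_sum_le _ _).trans_eq (Finset.sum_congr rfl fun z _ => ?_)
        rw [norm_mul, Complex.norm_exp_I_mul_ofReal, one_mul]

theorem stmt10_general (Λ : Finset (ℤ × ℤ)) (A : ℤ × ℤ → ℤ × ℤ → ℝ)
    (ψ : ℤ × ℤ → ℂ) (E M ε : ℝ)
    (heig : ∀ x ∈ Λ, Ham Λ A ψ x = (E : ℂ) * ψ x)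
    (x₀ : ℤ × ℤ) (hx₀ : x₀ ∈ Λ) (hM : ‖ψ x₀‖ = M)
    (hmax : ∀ x ∈ Λ, ‖ψ x‖ ≤ M)
    (y₀' : ℤ × ℤ) (hy₀' : y₀' ∈ Λ) (hedge : edge x₀ y₀')
    (hsmall : ‖ψ y₀'‖ ≤ ε * M) :
    ∀ y ∈ Λ, edge x₀ y → y ≠ y₀' → (2 - E - ε) * M ≤ ‖ψ y‖ := by
  intro y hy hedgey hne
  have hlower := sub_mul_norm_le_sum_norm_of_ham_eq (heig x₀ hx₀)
  have hupper : ∑ z ∈ Λ.filter (edge x₀), ‖ψ z‖ ≤ ‖ψ y‖ + ‖ψ y₀'‖ + (2 : ℕ) * M :=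
    sum_le_add_add_mul_of_card_le (card_filter_edge_le_four Λ x₀)
      (Finset.mem_filter.2 ⟨hy, hedgey⟩) (Finset.mem_filter.2 ⟨hy₀', hedge⟩) hne
      (fun z hz => hmax z (Finset.mem_filter.1 hz).1) (hM ▸ norm_nonneg _)
  rw [hM] at hlower
  push_cast at hupper
  linarith

/-- same setting; if moreover a nearest neighbor `y₀' ∈ Λ` of `x₀`
satisfies `|ψ(y₀')| ≤ ε M` (`ε ≥ 0`), then every other nearest neighbor `y ∈ Λ` of `x₀`
satisfies `|ψ(y)| ≥ (2 - E - ε) M`. -/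
theorem stmt10 (Λ : Finset (ℤ × ℤ)) (A : ℤ × ℤ → ℤ × ℤ → ℝ)
    (hA : ∀ x y, edge x y → A x y = -A y x)
    (ψ : ℤ × ℤ → ℂ) (E M ε : ℝ)
    (hout : ∀ x ∉ Λ, ψ x = 0)
    (heig : ∀ x ∈ Λ, Ham Λ A ψ x = (E : ℂ) * ψ x)
    (hE0 : 0 ≤ E) (hE4 : E ≤ 4) (hε : 0 ≤ ε)
    (x₀ : ℤ × ℤ) (hx₀ : x₀ ∈ Λ) (hM : ‖ψ x₀‖ = M)
    (hmax : ∀ x ∈ Λ, ‖ψ x‖ ≤ M)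
    (y₀' : ℤ × ℤ) (hy₀' : y₀' ∈ Λ) (hedge : edge x₀ y₀')
    (hsmall : ‖ψ y₀'‖ ≤ ε * M) :
    ∀ y ∈ Λ, edge x₀ y → y ≠ y₀' → (2 - E - ε) * M ≤ ‖ψ y‖ :=
  stmt10_general Λ A ψ E M ε heig x₀ hx₀ hM hmax y₀' hy₀' hedge hsmall
end

section
/- Existence of a well-supported plaquette: let E* < 4 − √8. There is a constant c = c(E*) > 0 such that for every eigenfunction ψ of H_Λ(A) with eigenvalue E ≤ E* (and E ≥ 0), there exists a unit square Q = {x, x+e₁, x+e₂, x+e₁+e₂} contained in Λ with min_{y ∈ Q} |ψ(y)| ≥ c · max_{z ∈ Λ} |ψ(z)|. -/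
open scoped Classical

/-- The box `Λ_L = {x ∈ ℤ² : max(|x₁|, |x₂|) ≤ L}`. -/
noncomputable def box (L : ℕ) : Finset (ℤ × ℤ) := Finset.Icc (-(L : ℤ), -(L : ℤ)) ((L : ℤ), (L : ℤ))

/-- The unit square (plaquette) with lower left corner `p`. -/
def squareF (p : ℤ × ℤ) : Finset (ℤ × ℤ) := {p, p + (1, 0), p + (0, 1), p + (1, 1)}

/-!
Write `s = 4 - E > √8`. Since `|e^{iA}| = 1`, the eigenvalue equation gives
`s |ψ x| ≤ Σ_{y ~ x} |ψ y|`, and together with `|ψ| ≤ M` this is all that is used.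
At a maximum point `x₀` either some neighbour is below `c M`, and then the other three are at
least `(s - 2 - c) M`, or all are at least `c M` and the largest is at least `(s / 4) M`.
Either way some neighbour `x₀ + d` is at least `(s / 4) M` while both neighbours `x₀ ± d⊥` are
at least `c M`. The inequality at `x₀ + d` then makes `|ψ (x₀ + d + d⊥)| + |ψ (x₀ + d - d⊥)|`
at least `(s² / 4 - 2) M = 2 c M`, so one of the two closes a plaquette on which `|ψ| ≥ c M`.
For `M > 0` that plaquette lies in the box because `ψ` vanishes outside it.
-/

section

open Finset

def unitDirs : Finset (ℤ × ℤ) := {(1, 0), (-1, 0), (0, 1), (0, -1)}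

def perp (d : ℤ × ℤ) : ℤ × ℤ := (-d.2, d.1)

noncomputable def plaquetteConst (s : ℝ) : ℝ := (s ^ 2 - 8) / 8

lemma mk_mem_unitDirs_of_sq_add_sq_eq_one {a b : ℤ} (h : a ^ 2 + b ^ 2 = 1) :
    (a, b) ∈ unitDirs := by
  have ha : a ^ 2 ≤ 1 := by nlinarith [sq_nonneg b]
  have hb : b ^ 2 ≤ 1 := by nlinarith [sq_nonneg a]
  obtain ⟨ha₁, ha₂⟩ : -1 ≤ a ∧ a ≤ 1 := ⟨by nlinarith, by nlinarith⟩
  obtain ⟨hb₁, hb₂⟩ : -1 ≤ b ∧ b ≤ 1 := ⟨by nlinarith, by nlinarith⟩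
  interval_cases a <;> interval_cases b <;> simp_all [unitDirs]

lemma sub_mem_unitDirs_of_edge {x y : ℤ × ℤ} (h : edge x y) : y - x ∈ unitDirs :=
  mk_mem_unitDirs_of_sq_add_sq_eq_one (by unfold edge at h; linear_combination h)

lemma neg_mem_unitDirs {d : ℤ × ℤ} (hd : d ∈ unitDirs) : -d ∈ unitDirs := by
  simp only [unitDirs, mem_insert, mem_singleton] at hd
  rcases hd with rfl | rfl | rfl | rfl <;> decide

lemma perp_mem_unitDirs {d : ℤ × ℤ} (hd : d ∈ unitDirs) : perp d ∈ unitDirs := by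
  simp only [unitDirs, mem_insert, mem_singleton] at hd
  rcases hd with rfl | rfl | rfl | rfl <;> decide

lemma perp_neg (d : ℤ × ℤ) : perp (-d) = -perp d := rfl

lemma card_unitDirs : #unitDirs = 4 := rfl

lemma sum_unitDirs_eq {M : Type*} [AddCommMonoid M] (g : ℤ × ℤ → M) (x : ℤ × ℤ) {d : ℤ × ℤ}
    (hd : d ∈ unitDirs) :
    ∑ e ∈ unitDirs, g (x + e) = g (x + d) + g (x - d) + g (x + perp d) + g (x - perp d) := by
  simp only [unitDirs, mem_insert, mem_singleton] at hd
  rcases hd with rfl | rfl | rfl | rfl <;> simp [unitDirs, perp, sub_eq_add_neg] <;> abel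

lemma exists_squareF_subset (x : ℤ × ℤ) {d v : ℤ × ℤ} (hd : d ∈ unitDirs)
    (hv : v = perp d ∨ v = -perp d) :
    ∃ p, squareF p ⊆ {x, x + d, x + v, x + d + v} := by
  refine ⟨x + (min 0 (d.1 + v.1), min 0 (d.2 + v.2)), fun q hq => ?_⟩
  simp only [unitDirs, mem_insert, mem_singleton] at hd
  simp only [squareF, mem_insert, mem_singleton] at hq ⊢
  rcases hd with rfl | rfl | rfl | rfl <;> rcases hv with rfl | rfl <;>
    rcases hq with rfl | rfl | rfl | rfl <;> simp [perp, Prod.ext_iff]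

lemma sum_norm_edge_le_sum_unitDirs (Λ : Finset (ℤ × ℤ)) (ψ : ℤ × ℤ → ℂ) (x : ℤ × ℤ) :
    ∑ y ∈ Λ.filter (edge x), ‖ψ y‖ ≤ ∑ d ∈ unitDirs, ‖ψ (x + d)‖ := by
  have hsub : Λ.filter (edge x) ⊆ unitDirs.map (addLeftEmbedding x) := fun y hy =>
    mem_map.2 ⟨y - x, sub_mem_unitDirs_of_edge (mem_filter.1 hy).2, add_sub_cancel x y⟩
  calc ∑ y ∈ Λ.filter (edge x), ‖ψ y‖
      ≤ ∑ y ∈ unitDirs.map (addLeftEmbedding x), ‖ψ y‖ :=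
        sum_le_sum_of_subset_of_nonneg hsub fun _ _ _ => norm_nonneg _
    _ = ∑ d ∈ unitDirs, ‖ψ (x + d)‖ := sum_map _ _ _

lemma mul_norm_le_sum_unitDirs_of_eigen {Λ : Finset (ℤ × ℤ)} {A : ℤ × ℤ → ℤ × ℤ → ℝ}
    {ψ : ℤ × ℤ → ℂ} {E : ℝ} (hψ : ∀ x ∉ Λ, ψ x = 0)
    (heig : ∀ x ∈ Λ, Ham Λ A ψ x = (E : ℂ) * ψ x) (x : ℤ × ℤ) :
    (4 - E) * ‖ψ x‖ ≤ ∑ d ∈ unitDirs, ‖ψ (x + d)‖ := by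
  by_cases hx : x ∈ Λ
  · have hsum : ((4 - E : ℝ) : ℂ) * ψ x =
        ∑ y ∈ Λ.filter (edge x), Complex.exp (Complex.I * A x y) * ψ y := by
      have := heig x hx
      unfold Ham at this
      push_cast
      linear_combination this
    calc (4 - E) * ‖ψ x‖ ≤ ‖((4 - E : ℝ) : ℂ) * ψ x‖ := by
          rw [norm_mul, Complex.norm_real, Real.norm_eq_abs]
          exact mul_le_mul_of_nonneg_right (le_abs_self _) (norm_nonneg _)
      _ ≤ ∑ y ∈ Λ.filter (edge x), ‖ψ y‖ := by
          rw [hsum]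
          refine (norm_sum_le _ _).trans (sum_le_sum fun y _ => ?_)
          rw [norm_mul, Complex.norm_exp_I_mul_ofReal, one_mul]
      _ ≤ _ := sum_norm_edge_le_sum_unitDirs Λ ψ x
  · rw [hψ x hx, norm_zero, mul_zero]
    exact sum_nonneg fun _ _ => norm_nonneg _

section Plaquette

variable {f : ℤ × ℤ → ℝ} {s M : ℝ}

lemma sub_two_mul_le_add_perp (hle : ∀ x, f x ≤ M)
    (hsub : ∀ x, s * f x ≤ ∑ d ∈ unitDirs, f (x + d)) {d : ℤ × ℤ} (hd : d ∈ unitDirs)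
    (y : ℤ × ℤ) : s * f y - 2 * M ≤ f (y + perp d) + f (y - perp d) := by
  have := hsub y
  rw [sum_unitDirs_eq f y hd] at this
  linarith [hle (y + d), hle (y - d)]

lemma exists_large_nbr_of_max (hs : 2 ≤ s) (hs4 : s ≤ 4) (hM : 0 ≤ M) (hle : ∀ x, f x ≤ M)
    (hsub : ∀ x, s * f x ≤ ∑ d ∈ unitDirs, f (x + d)) {x₀ : ℤ × ℤ} (hx₀ : f x₀ = M) :
    ∃ d ∈ unitDirs, s / 4 * M ≤ f (x₀ + d) ∧
      plaquetteConst s * M ≤ f (x₀ + perp d) ∧ plaquetteConst s * M ≤ f (x₀ - perp d) := by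
  have hc : plaquetteConst s ≤ s / 4 := by unfold plaquetteConst; nlinarith
  have hc' : plaquetteConst s + s / 4 ≤ s - 2 := by unfold plaquetteConst; nlinarith
  have hcM : plaquetteConst s * M ≤ s / 4 * M := mul_le_mul_of_nonneg_right hc hM
  have hcM' : plaquetteConst s * M + s / 4 * M ≤ (s - 2) * M := by
    rw [← add_mul]; exact mul_le_mul_of_nonneg_right hc' hM
  by_cases hsmall : ∃ e ∈ unitDirs, f (x₀ + e) < plaquetteConst s * M
  · obtain ⟨e, he, hfe⟩ := hsmall
    have := hsub x₀
    rw [sum_unitDirs_eq f x₀ he, hx₀] at this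
    refine ⟨-e, neg_mem_unitDirs he, ?_, ?_, ?_⟩
    · rw [← sub_eq_add_neg]
      linarith [hle (x₀ + perp e), hle (x₀ - perp e)]
    · rw [perp_neg, ← sub_eq_add_neg]
      linarith [hle (x₀ - e), hle (x₀ + perp e)]
    · rw [perp_neg, sub_neg_eq_add]
      linarith [hle (x₀ - e), hle (x₀ - perp e)]
  · push Not at hsmall
    obtain ⟨d, hd, hmax⟩ := exists_max_image unitDirs (fun e => f (x₀ + e)) ⟨_, mem_insert_self _ _⟩
    have hsum : ∑ e ∈ unitDirs, f (x₀ + e) ≤ 4 * f (x₀ + d) := by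
      simpa [card_unitDirs] using sum_le_card_nsmul unitDirs _ _ hmax
    refine ⟨d, hd, ?_, hsmall _ (perp_mem_unitDirs hd), ?_⟩
    · nlinarith [hsub x₀]
    · rw [sub_eq_add_neg]
      exact hsmall _ (neg_mem_unitDirs (perp_mem_unitDirs hd))

theorem exists_squareF_ge_of_max (hs : 2 ≤ s) (hs4 : s ≤ 4) (hM : 0 ≤ M) (hle : ∀ x, f x ≤ M)
    (hsub : ∀ x, s * f x ≤ ∑ d ∈ unitDirs, f (x + d)) {x₀ : ℤ × ℤ} (hx₀ : f x₀ = M) :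
    ∃ p, ∀ q ∈ squareF p, plaquetteConst s * M ≤ f q := by
  set c := plaquetteConst s
  obtain ⟨d, hd, hlarge, hplus, hminus⟩ := exists_large_nbr_of_max hs hs4 hM hle hsub hx₀
  have hc1 : c ≤ 1 := by unfold c plaquetteConst; nlinarith
  have hcd : c * M ≤ f (x₀ + d) := by
    refine le_trans (mul_le_mul_of_nonneg_right ?_ hM) hlarge
    unfold c plaquetteConst; nlinarith
  have htrans : 2 * (c * M) ≤ f (x₀ + d + perp d) + f (x₀ + d - perp d) := by
    have := sub_two_mul_le_add_perp hle hsub hd (x₀ + d)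
    have : s * (s / 4 * M) ≤ s * f (x₀ + d) := mul_le_mul_of_nonneg_left hlarge (by linarith)
    unfold c plaquetteConst; nlinarith
  obtain ⟨v, hv, hfv, hfdv⟩ : ∃ v, (v = perp d ∨ v = -perp d) ∧
      c * M ≤ f (x₀ + v) ∧ c * M ≤ f (x₀ + d + v) := by
    by_cases h : c * M ≤ f (x₀ + d + perp d)
    · exact ⟨perp d, Or.inl rfl, hplus, h⟩
    · refine ⟨-perp d, Or.inr rfl, ?_, ?_⟩ <;> rw [← sub_eq_add_neg]
      exacts [hminus, by linarith]
  obtain ⟨p, hp⟩ := exists_squareF_subset x₀ hd hv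
  refine ⟨p, fun q hq => ?_⟩
  have hq := hp hq
  simp only [mem_insert, mem_singleton] at hq
  rcases hq with rfl | rfl | rfl | rfl
  · rw [hx₀]; simpa using mul_le_mul_of_nonneg_right hc1 hM
  all_goals assumption

end Plaquette

end

lemma squareF_zero_subset_box {L : ℕ} (hL : 1 ≤ L) : squareF 0 ⊆ box L := by
  intro q hq
  simp only [squareF, Finset.mem_insert, Finset.mem_singleton] at hq
  rcases hq with rfl | rfl | rfl | rfl <;> simp [box, Prod.le_def] <;> omega

/-- existence of a well-supported plaquette.  For `E* < 4 - √8` there is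
`c = c(E*) > 0` such that every eigenfunction `ψ` of `H_{Λ_L}(A)` with eigenvalue
`E ∈ [0, E*]` (extended by zero outside `Λ_L`, with maximum modulus `M`) admits a unit
square `Q ⊆ Λ_L` on which `|ψ| ≥ c M`. -/
theorem stmt12 (Estar : ℝ) (hEstar : Estar < 4 - Real.sqrt 8) :
    ∃ c > 0, ∀ (L : ℕ), 1 ≤ L → ∀ (A : ℤ × ℤ → ℤ × ℤ → ℝ) (ψ : ℤ × ℤ → ℂ) (E M : ℝ),
      (∀ x y, edge x y → A x y = -A y x) →
      (∀ x ∉ box L, ψ x = 0) →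
      (∀ x ∈ box L, Ham (box L) A ψ x = (E : ℂ) * ψ x) →
      0 ≤ E → E ≤ Estar →
      (∃ z ∈ box L, ‖ψ z‖ = M) →
      (∀ z ∈ box L, ‖ψ z‖ ≤ M) →
      ∃ p : ℤ × ℤ, squareF p ⊆ box L ∧ ∀ q ∈ squareF p, c * M ≤ ‖ψ q‖ := by
  set s := min (4 - Estar) 4
  have hsqrt8 : Real.sqrt 8 < s := lt_min (by linarith) (by
    rw [Real.sqrt_lt' (by norm_num)]; norm_num)
  have hs2 : 2 ≤ s := by nlinarith [Real.sqrt_nonneg 8, Real.sq_sqrt (show (0 : ℝ) ≤ 8 by norm_num)]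
  have hc : 0 < plaquetteConst s := by
    unfold plaquetteConst; linarith [Real.lt_sq_of_sqrt_lt hsqrt8]
  refine ⟨plaquetteConst s, hc, fun L hL A ψ E M _ hψ heig _ hE ⟨x₀, _, hx₀⟩ hle => ?_⟩
  have hM : 0 ≤ M := hx₀ ▸ norm_nonneg _
  have hle' : ∀ x, ‖ψ x‖ ≤ M := fun x => by
    by_cases hx : x ∈ box L
    exacts [hle x hx, by rw [hψ x hx, norm_zero]; exact hM]
  have hsub : ∀ x, s * ‖ψ x‖ ≤ ∑ d ∈ unitDirs, ‖ψ (x + d)‖ := fun x =>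
    (mul_le_mul_of_nonneg_right (show s ≤ 4 - E by linarith [min_le_left (4 - Estar) 4])
      (norm_nonneg _)).trans (mul_norm_le_sum_unitDirs_of_eigen hψ heig x)
  rcases hM.eq_or_lt with rfl | hMpos
  · exact ⟨0, squareF_zero_subset_box hL, fun q _ => by simp⟩
  obtain ⟨p, hp⟩ := exists_squareF_ge_of_max hs2 (min_le_right _ _) hM hle' hsub hx₀
  refine ⟨p, fun q hq => ?_, hp⟩
  by_contra hq'
  have := hp q hq
  rw [hψ q hq', norm_zero] at this
  linarith [mul_pos hc hMpos]
end

section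
/- Current recovery from flux derivatives: for each directed edge a in Λ interior to the lattice, let f_a be the unique plaquette such that a ∈ ∂f_a (with the orientation convention of the oriented boundary). Then for a ∈ 𝒜_Λ, J_ψ(a) = c_a ⟨Y_{f_a} H⟩_ψ − c_{ā} ⟨Y_{f_{ā}} H⟩_ψ, where c_a = 1 if f_a ⊂ Λ and c_a = 0 otherwise, and ψ is any eigenfunction of H_Λ(A) with real eigenvalue. -/
/-!
Extended by zero outside `Λ_L`, the current of an eigenfunction with real eigenvalue is a
circulation: antisymmetric and divergence free at every site of `ℤ²`. A circulation has a stream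
function `s` on plaquettes, `J(a) = s(f_a) - s(f_ā)`: let `s(f)` be the current crossing the
horizontal string from `f` rightwards out of the box (the string-gauge value of `⟨Y_f H⟩`);
divergence-freeness moves the string, so `s` vanishes on plaquettes not contained in `Λ_L`.
Summing by parts, `Σ_a α(a) J(a) = 2 Σ_f s(f) · flux_α(f) = 2 s(f₀)` for every antisymmetric
gauge `α` with flux `δ_{f₀}`.
-/

open scoped Classical

/-- The flux of the vector potential `A` through the plaquette with lower left corner
`p`: the sum of `A` over the four directed boundary edges. -/
def flux (A : ℤ × ℤ → ℤ × ℤ → ℝ) (p : ℤ × ℤ) : ℝ :=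
  A p (p + (1, 0)) + A (p + (1, 0)) (p + (1, 1))
    + A (p + (1, 1)) (p + (0, 1)) + A (p + (0, 1)) p

/-- For a directed edge `(x,y)`, the lower left corner of the unique plaquette `f` whose
oriented boundary `∂f` contains `(x,y)`. -/
def edgeFace (x y : ℤ × ℤ) : ℤ × ℤ :=
  if y = x + (1, 0) then x
  else if y = x - (1, 0) then y - (0, 1)
  else if y = x + (0, 1) then x - (1, 0)
  else y

lemma mem_box_iff {L : ℕ} {x : ℤ × ℤ} :
    x ∈ box L ↔ -(L : ℤ) ≤ x.1 ∧ x.1 ≤ L ∧ -(L : ℤ) ≤ x.2 ∧ x.2 ≤ L := by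
  simp only [box, Finset.mem_Icc, Prod.le_def]
  tauto

lemma squareF_subset_box_iff {L : ℕ} {p : ℤ × ℤ} :
    squareF p ⊆ box L ↔ -(L : ℤ) ≤ p.1 ∧ p.1 + 1 ≤ L ∧ -(L : ℤ) ≤ p.2 ∧ p.2 + 1 ≤ L := by
  simp only [squareF, Finset.insert_subset_iff, Finset.singleton_subset_iff, mem_box_iff,
    Prod.fst_add, Prod.snd_add]
  omega

lemma edge_symm {x y : ℤ × ℤ} (h : edge x y) : edge y x := by
  unfold edge at *
  linear_combination h

lemma mem_nbrs_iff {x y : ℤ × ℤ} : y ∈ nbrs x ↔ edge x y := by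
  obtain ⟨a, b⟩ := x
  obtain ⟨c, d⟩ := y
  simp only [nbrs, edge, Finset.mem_insert, Finset.mem_singleton, Prod.mk_add_mk,
    Prod.mk_sub_mk, Prod.mk.injEq]
  constructor
  · rintro (⟨rfl, rfl⟩ | ⟨rfl, rfl⟩ | ⟨rfl, rfl⟩ | ⟨rfl, rfl⟩) <;> ring
  · intro h
    have hac : |a - c| ≤ 1 := by
      rw [← sq_le_one_iff_abs_le_one]; nlinarith [sq_nonneg (b - d)]
    have hbd : |b - d| ≤ 1 := by
      rw [← sq_le_one_iff_abs_le_one]; nlinarith [sq_nonneg (a - c)]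
    rcases Int.abs_le_one_iff.mp hac with h₁ | h₁ | h₁ <;>
      rcases Int.abs_le_one_iff.mp hbd with h₂ | h₂ | h₂ <;>
      simp only [h₁, h₂] at h <;> omega

lemma edge_cases {x y : ℤ × ℤ} (h : edge x y) :
    y = x + (1, 0) ∨ x = y + (1, 0) ∨ y = x + (0, 1) ∨ x = y + (0, 1) := by
  simpa only [← mem_nbrs_iff, nbrs, Finset.mem_insert, Finset.mem_singleton,
    eq_sub_iff_add_eq, eq_comm (a := x)] using h

lemma sum_nbrs {M : Type*} [AddCommMonoid M] (x : ℤ × ℤ) (g : ℤ × ℤ → M) :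
    ∑ y ∈ nbrs x, g y = g (x + (1, 0)) + g (x - (1, 0)) + g (x + (0, 1)) + g (x - (0, 1)) := by
  rw [nbrs, Finset.sum_insert, Finset.sum_insert, Finset.sum_insert, Finset.sum_singleton,
    add_assoc, add_assoc] <;> simp [Prod.ext_iff] <;> omega

lemma edgeFace_east (x : ℤ × ℤ) : edgeFace x (x + (1, 0)) = x := by
  simp [edgeFace]

lemma edgeFace_west (x : ℤ × ℤ) : edgeFace (x + (1, 0)) x = x - (0, 1) := by
  simp [edgeFace, Prod.ext_iff]
  omega

lemma edgeFace_north (x : ℤ × ℤ) : edgeFace x (x + (0, 1)) = x - (1, 0) := by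
  simp [edgeFace, Prod.ext_iff]

lemma edgeFace_south (x : ℤ × ℤ) : edgeFace (x + (0, 1)) x = x := by
  simp [edgeFace, Prod.ext_iff]
  omega

def plaquetteBoundary (p : ℤ × ℤ) : Finset ((ℤ × ℤ) × (ℤ × ℤ)) :=
  {(p, p + (1, 0)), (p + (1, 0), p + (1, 1)), (p + (1, 1), p + (0, 1)), (p + (0, 1), p)}

lemma mem_plaquetteBoundary_iff {p : ℤ × ℤ} {a : (ℤ × ℤ) × (ℤ × ℤ)} :
    a ∈ plaquetteBoundary p ↔ edge a.1 a.2 ∧ edgeFace a.1 a.2 = p := by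
  obtain ⟨x, y⟩ := a
  constructor
  · intro h
    simp only [plaquetteBoundary, Finset.mem_insert, Finset.mem_singleton, Prod.mk.injEq] at h
    rcases h with ⟨rfl, rfl⟩ | ⟨rfl, rfl⟩ | ⟨rfl, rfl⟩ | ⟨rfl, rfl⟩ <;>
      simp [edge, edgeFace, Prod.ext_iff] <;> omega
  · rintro ⟨hxy, rfl⟩
    dsimp only at hxy ⊢
    rcases edge_cases hxy with rfl | rfl | rfl | rfl <;>
      simp [plaquetteBoundary, edgeFace_east, edgeFace_west, edgeFace_north, edgeFace_south,
        Prod.ext_iff]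

lemma flux_eq_sum_plaquetteBoundary (β : ℤ × ℤ → ℤ × ℤ → ℝ) (p : ℤ × ℤ) :
    flux β p = ∑ a ∈ plaquetteBoundary p, β a.1 a.2 := by
  rw [plaquetteBoundary, Finset.sum_insert, Finset.sum_insert, Finset.sum_insert,
    Finset.sum_singleton, flux, add_assoc, add_assoc] <;> simp [Prod.ext_iff]

lemma mem_squareF_of_mem_plaquetteBoundary {p : ℤ × ℤ} {a : (ℤ × ℤ) × (ℤ × ℤ)}
    (h : a ∈ plaquetteBoundary p) : a.1 ∈ squareF p ∧ a.2 ∈ squareF p := by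
  simp only [plaquetteBoundary, Finset.mem_insert, Finset.mem_singleton] at h
  rcases h with rfl | rfl | rfl | rfl <;> simp [squareF]

/-- `𝒜_Λ` for `Λ = Λ_L`. -/
noncomputable def boxEdges (L : ℕ) : Finset ((ℤ × ℤ) × (ℤ × ℤ)) :=
  (box L ×ˢ box L).filter fun a => edge a.1 a.2

lemma mem_boxEdges_iff {L : ℕ} {a : (ℤ × ℤ) × (ℤ × ℤ)} :
    a ∈ boxEdges L ↔ a.1 ∈ box L ∧ a.2 ∈ box L ∧ edge a.1 a.2 := by
  simp [boxEdges, and_assoc]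

lemma sum_box_filter_edge_eq_sum_boxEdges {M : Type*} [AddCommMonoid M] (L : ℕ)
    (F : ℤ × ℤ → ℤ × ℤ → M) :
    ∑ x ∈ box L, ∑ y ∈ (box L).filter (fun y => edge x y), F x y
      = ∑ a ∈ boxEdges L, F a.1 a.2 := by
  simp only [boxEdges, Finset.sum_filter, Finset.sum_product]

lemma sum_boxEdges_swap {M : Type*} [AddCommMonoid M] (L : ℕ) (F : ℤ × ℤ → ℤ × ℤ → M) :
    ∑ a ∈ boxEdges L, F a.2 a.1 = ∑ a ∈ boxEdges L, F a.1 a.2 :=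
  Finset.sum_nbij' Prod.swap Prod.swap
    (fun a ha => by
      rw [mem_boxEdges_iff] at ha ⊢; exact ⟨ha.2.1, ha.1, edge_symm ha.2.2⟩)
    (fun a ha => by
      rw [mem_boxEdges_iff] at ha ⊢; exact ⟨ha.2.1, ha.1, edge_symm ha.2.2⟩)
    (fun _ _ => rfl) (fun _ _ => rfl) (fun _ _ => rfl)

lemma filter_boxEdges_edgeFace_eq {L : ℕ} {p : ℤ × ℤ} (hp : squareF p ⊆ box L) :
    (boxEdges L).filter (fun a => edgeFace a.1 a.2 = p) = plaquetteBoundary p := by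
  ext a
  rw [Finset.mem_filter, mem_boxEdges_iff, mem_plaquetteBoundary_iff]
  constructor
  · rintro ⟨⟨-, -, hedge⟩, hface⟩
    exact ⟨hedge, hface⟩
  · intro h
    obtain ⟨h₁, h₂⟩ := mem_squareF_of_mem_plaquetteBoundary (mem_plaquetteBoundary_iff.mpr h)
    exact ⟨⟨hp h₁, hp h₂, h.1⟩, h.2⟩

lemma Function.Periodic.eq_of_period_one {M : Type*} {g : ℤ → M} (hg : Function.Periodic g 1)
    (m n : ℤ) : g m = g n := by
  simpa using (hg.int_mul_eq m).trans (hg.int_mul_eq n).symm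

structure IsCirculation (L : ℕ) (J : ℤ × ℤ → ℤ × ℤ → ℝ) : Prop where
  antisymm : ∀ x y, J y x = -J x y
  sum_nbrs_eq_zero : ∀ x, ∑ y ∈ nbrs x, J x y = 0
  eq_zero_of_notMem : ∀ x y, x ∉ box L → J x y = 0

/-- The current of `J` through the vertical edges to the right of the plaquette `p` in its row, i.e.
`⟨Y_p H⟩` computed in the string gauge supported on those edges. -/
noncomputable def stream (L : ℕ) (J : ℤ × ℤ → ℤ × ℤ → ℝ) (p : ℤ × ℤ) : ℝ :=
  ∑ k ∈ Finset.Ioc p.1 L, J (k, p.2) (k, p.2 + 1)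

namespace IsCirculation

variable {L : ℕ} {J : ℤ × ℤ → ℤ × ℤ → ℝ}

lemma eq_zero_of_notMem_right (hJ : IsCirculation L J) {x y : ℤ × ℤ} (hy : y ∉ box L) :
    J x y = 0 := by
  rw [hJ.antisymm y x, hJ.eq_zero_of_notMem y x hy, neg_zero]

lemma div_eq_zero (hJ : IsCirculation L J) (a b : ℤ) :
    J (a, b) (a + 1, b) + J (a, b) (a - 1, b) + J (a, b) (a, b + 1) + J (a, b) (a, b - 1) = 0 := by
  simpa [sum_nbrs] using hJ.sum_nbrs_eq_zero (a, b)

lemma apply_north (hJ : IsCirculation L J) (x : ℤ × ℤ) :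
    J x (x + (0, 1)) = stream L J (x - (1, 0)) - stream L J x := by
  obtain ⟨a, b⟩ := x
  simp only [stream, Prod.mk_add_mk, Prod.mk_sub_mk, add_zero, sub_zero,
    Finset.Ioc_sub_one_left_eq_Icc]
  rcases le_or_gt a L with h | h
  · rw [← Finset.Ioc_insert_left h, Finset.sum_insert Finset.left_notMem_Ioc]
    ring
  · rw [Finset.Icc_eq_empty (by omega), Finset.Ioc_eq_empty (by omega),
      hJ.eq_zero_of_notMem _ _ (by rw [mem_box_iff]; omega)]
    simp

lemma apply_east (hJ : IsCirculation L J) (x : ℤ × ℤ) :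
    J x (x + (1, 0)) = stream L J x - stream L J (x - (0, 1)) := by
  obtain ⟨a, b⟩ := x
  set D : ℤ → ℝ := fun n => stream L J (n, b) - stream L J (n, b - 1) - J (n, b) (n + 1, b)
  suffices D a = 0 by
    simp only [D] at this
    simp only [Prod.mk_add_mk, Prod.mk_sub_mk, add_zero, sub_zero]
    linarith
  have periodic : Function.Periodic D 1 := by
    intro n
    have h₁ := hJ.apply_north (n + 1, b)
    have h₂ := hJ.apply_north (n + 1, b - 1)
    have h₃ := hJ.div_eq_zero (n + 1) b
    have h₄ := hJ.antisymm (n, b) (n + 1, b)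
    have h₅ := hJ.antisymm (n + 1, b - 1) (n + 1, b)
    simp only [Prod.mk_add_mk, Prod.mk_sub_mk, add_zero, sub_zero, add_sub_cancel_right,
      sub_add_cancel] at h₁ h₂ h₃
    simp only [D]
    linarith
  have leaves_box : J ((L : ℤ), b) ((L : ℤ) + 1, b) = 0 :=
    hJ.eq_zero_of_notMem_right (by rw [mem_box_iff]; omega)
  refine (periodic.eq_of_period_one a L).trans ?_
  simp [D, stream, leaves_box]

lemma stream_eq_zero (hJ : IsCirculation L J) {p : ℤ × ℤ} (hp : ¬ squareF p ⊆ box L) :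
    stream L J p = 0 := by
  obtain ⟨a, b⟩ := p
  rw [squareF_subset_box_iff] at hp
  have outside_rows : ∀ a b : ℤ, (b < -(L : ℤ) ∨ (L : ℤ) ≤ b) → stream L J (a, b) = 0 := by
    intro a b hb
    refine Finset.sum_eq_zero fun k _ => ?_
    rcases hb with hb | hb
    · exact hJ.eq_zero_of_notMem _ _ (by rw [mem_box_iff]; omega)
    · exact hJ.eq_zero_of_notMem_right (by rw [mem_box_iff]; omega)
  by_cases hb : b < -(L : ℤ) ∨ (L : ℤ) ≤ b
  · exact outside_rows a b hb
  by_cases ha : (L : ℤ) ≤ a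
  · simp [stream, Finset.Ioc_eq_empty_of_le ha]
  -- to the left of the box no current crosses the column, so `stream` is constant along it
  have periodic : Function.Periodic (fun n => stream L J (a, n)) 1 := by
    intro n
    have h := hJ.apply_east (a, n + 1)
    rw [hJ.eq_zero_of_notMem _ _ (by rw [mem_box_iff]; omega)] at h
    simp only [Prod.mk_sub_mk, sub_zero, add_sub_cancel_right] at h
    linarith
  exact (periodic.eq_of_period_one b L).trans (outside_rows a L (Or.inr le_rfl))

lemma eq_stream_sub_stream (hJ : IsCirculation L J) {x y : ℤ × ℤ} (hxy : edge x y) :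
    J x y = stream L J (edgeFace x y) - stream L J (edgeFace y x) := by
  rcases edge_cases hxy with rfl | rfl | rfl | rfl
  · rw [edgeFace_east, edgeFace_west, hJ.apply_east]
  · rw [edgeFace_east, edgeFace_west, hJ.antisymm, hJ.apply_east, neg_sub]
  · rw [edgeFace_north, edgeFace_south, hJ.apply_north]
  · rw [edgeFace_north, edgeFace_south, hJ.antisymm, hJ.apply_north, neg_sub]

lemma sum_filter_edgeFace_eq (hJ : IsCirculation L J) (β : ℤ × ℤ → ℤ × ℤ → ℝ) (p : ℤ × ℤ) :
    ∑ a ∈ (boxEdges L).filter (fun a => edgeFace a.1 a.2 = p),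
        β a.1 a.2 * stream L J (edgeFace a.1 a.2)
      = stream L J p * flux β p := by
  by_cases hp : squareF p ⊆ box L
  · rw [filter_boxEdges_edgeFace_eq hp, flux_eq_sum_plaquetteBoundary, Finset.mul_sum]
    refine Finset.sum_congr rfl fun a ha => ?_
    rw [(mem_plaquetteBoundary_iff.mp ha).2, mul_comm]
  · rw [hJ.stream_eq_zero hp, zero_mul]
    refine Finset.sum_eq_zero fun a ha => ?_
    rw [(Finset.mem_filter.mp ha).2, hJ.stream_eq_zero hp, mul_zero]

lemma sum_boxEdges_mul_eq (hJ : IsCirculation L J) {β : ℤ × ℤ → ℤ × ℤ → ℝ}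
    (hβ : ∀ x y, edge x y → β x y = -β y x) {f : ℤ × ℤ}
    (hflux : ∀ p, flux β p = if p = f then 1 else 0) :
    ∑ a ∈ boxEdges L, β a.1 a.2 * J a.1 a.2 = 2 * stream L J f := by
  set faces := (boxEdges L).image fun a : (ℤ × ℤ) × (ℤ × ℤ) => edgeFace a.1 a.2
  have mem_faces : squareF f ⊆ box L → f ∈ faces := by
    intro hf
    have h : (f, f + (1, 0)) ∈ (boxEdges L).filter (fun a => edgeFace a.1 a.2 = f) := by
      rw [filter_boxEdges_edgeFace_eq hf]
      simp [plaquetteBoundary]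
    exact Finset.mem_image.mpr ⟨_, (Finset.mem_filter.mp h).1, (Finset.mem_filter.mp h).2⟩
  calc ∑ a ∈ boxEdges L, β a.1 a.2 * J a.1 a.2
      = ∑ a ∈ boxEdges L, (β a.1 a.2 * stream L J (edgeFace a.1 a.2)
          + β a.2 a.1 * stream L J (edgeFace a.2 a.1)) := by
        refine Finset.sum_congr rfl fun a ha => ?_
        have hedge := (mem_boxEdges_iff.mp ha).2.2
        rw [hJ.eq_stream_sub_stream hedge, hβ _ _ (edge_symm hedge)]
        ring
    _ = 2 * ∑ a ∈ boxEdges L, β a.1 a.2 * stream L J (edgeFace a.1 a.2) := by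
        rw [Finset.sum_add_distrib,
          sum_boxEdges_swap L fun x y => β x y * stream L J (edgeFace x y)]
        ring
    _ = 2 * ∑ p ∈ faces, stream L J p * flux β p := by
        rw [← Finset.sum_fiberwise_of_maps_to (t := faces)
          fun a ha => Finset.mem_image_of_mem _ ha]
        simp only [hJ.sum_filter_edgeFace_eq]
    _ = 2 * stream L J f := by
        simp only [hflux, mul_ite, mul_one, mul_zero, Finset.sum_ite_eq']
        split_ifs with hf
        · rfl
        · rw [hJ.stream_eq_zero (mt mem_faces hf), mul_zero]

end IsCirculation

section Schrodinger

variable {L : ℕ} {A : ℤ × ℤ → ℤ × ℤ → ℝ} {ψ : ℤ × ℤ → ℂ}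

lemma cur_swap (hA : ∀ x y, edge x y → A x y = -A y x) {x y : ℤ × ℤ} (hxy : edge x y) :
    cur A ψ y x = -cur A ψ x y := by
  have h : (starRingEnd ℂ) (ψ y) * Complex.I * Complex.exp (Complex.I * (A y x)) * ψ x
      = -(starRingEnd ℂ) ((starRingEnd ℂ) (ψ x) * Complex.I * Complex.exp (Complex.I * (A x y))
          * ψ y) := by
    rw [hA y x (edge_symm hxy)]
    simp only [map_mul, ← Complex.exp_conj, Complex.conj_I, Complex.conj_ofReal,
      Complex.conj_conj, Complex.ofReal_neg]
    ring_nf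
  rw [cur, cur, h, Complex.neg_re, Complex.conj_re]
  ring

/-- Current conservation: by the eigenvalue equation the current leaving `v` is
`-2 Re (i (4 - E) |ψ v|²)`, which vanishes because `E` is real. -/
lemma sum_cur_eq_zero {E : ℝ} (heig : ∀ x ∈ box L, Ham (box L) A ψ x = (E : ℂ) * ψ x)
    {v : ℤ × ℤ} (hv : v ∈ box L) :
    ∑ y ∈ (box L).filter (fun y => edge v y), cur A ψ v y = 0 := by
  have hsum : ∑ y ∈ (box L).filter (fun y => edge v y),
      Complex.exp (Complex.I * (A v y)) * ψ y = (4 - (E : ℂ)) * ψ v := by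
    have h := heig v hv
    rw [Ham] at h
    linear_combination -h
  have hre : ((starRingEnd ℂ) (ψ v) * Complex.I * ((4 - (E : ℂ)) * ψ v)).re = 0 := by
    rw [show (starRingEnd ℂ) (ψ v) * Complex.I * ((4 - (E : ℂ)) * ψ v)
        = (((4 - E) * Complex.normSq (ψ v) : ℝ) : ℂ) * Complex.I by
      push_cast; rw [Complex.normSq_eq_conj_mul_self]; ring]
    simp
  have hfactor : ∑ y ∈ (box L).filter (fun y => edge v y), cur A ψ v y
      = -2 * ((starRingEnd ℂ) (ψ v) * Complex.I * ∑ y ∈ (box L).filter (fun y => edge v y),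
          Complex.exp (Complex.I * (A v y)) * ψ y).re := by
    rw [Finset.mul_sum, Complex.re_sum, Finset.mul_sum]
    exact Finset.sum_congr rfl fun y _ => by rw [cur, ← mul_assoc]
  rw [hfactor, hsum, hre, mul_zero]

noncomputable def boxCurrent (L : ℕ) (A : ℤ × ℤ → ℤ × ℤ → ℝ) (ψ : ℤ × ℤ → ℂ)
    (x y : ℤ × ℤ) : ℝ :=
  if x ∈ box L ∧ y ∈ box L ∧ edge x y then cur A ψ x y else 0

lemma boxCurrent_eq_cur {x y : ℤ × ℤ} (hx : x ∈ box L) (hy : y ∈ box L) (hxy : edge x y) :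
    boxCurrent L A ψ x y = cur A ψ x y :=
  if_pos ⟨hx, hy, hxy⟩

lemma isCirculation_boxCurrent {E : ℝ} (hA : ∀ x y, edge x y → A x y = -A y x)
    (heig : ∀ x ∈ box L, Ham (box L) A ψ x = (E : ℂ) * ψ x) :
    IsCirculation L (boxCurrent L A ψ) where
  antisymm x y := by
    by_cases h : x ∈ box L ∧ y ∈ box L ∧ edge x y
    · rw [boxCurrent_eq_cur h.2.1 h.1 (edge_symm h.2.2), boxCurrent_eq_cur h.1 h.2.1 h.2.2,
        cur_swap hA h.2.2]
    · rw [boxCurrent, boxCurrent, if_neg h, if_neg fun h' => h ⟨h'.2.1, h'.1, edge_symm h'.2.2⟩,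
        neg_zero]
  sum_nbrs_eq_zero x := by
    by_cases hx : x ∈ box L
    · have hnbrs : (box L).filter (fun y => edge x y) = (nbrs x).filter (· ∈ box L) := by
        ext y
        simp [mem_nbrs_iff, and_comm]
      rw [← sum_cur_eq_zero heig hx, hnbrs, Finset.sum_filter]
      exact Finset.sum_congr rfl fun y hy => by simp [boxCurrent, hx, mem_nbrs_iff.mp hy]
    · simp [boxCurrent, hx]
  eq_zero_of_notMem x y hx := by simp [boxCurrent, hx]

lemma sum_gauge_mul_cur_eq {E : ℝ} (hA : ∀ x y, edge x y → A x y = -A y x)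
    (heig : ∀ x ∈ box L, Ham (box L) A ψ x = (E : ℂ) * ψ x) {β : ℤ × ℤ → ℤ × ℤ → ℝ}
    (hβ : ∀ x y, edge x y → β x y = -β y x) {f : ℤ × ℤ}
    (hflux : ∀ p, flux β p = if p = f then 1 else 0) :
    ∑ x ∈ box L, ∑ y ∈ (box L).filter (fun y => edge x y), β x y * cur A ψ x y
      = 2 * stream L (boxCurrent L A ψ) f := by
  rw [sum_box_filter_edge_eq_sum_boxEdges, ←
    (isCirculation_boxCurrent hA heig).sum_boxEdges_mul_eq hβ hflux]
  refine Finset.sum_congr rfl fun a ha => ?_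
  obtain ⟨h₁, h₂, hedge⟩ := mem_boxEdges_iff.mp ha
  rw [boxCurrent_eq_cur h₁ h₂ hedge]

end Schrodinger

theorem stmt15_general (L : ℕ) (A : ℤ × ℤ → ℤ × ℤ → ℝ)
    (α : ℤ × ℤ → ℤ × ℤ → ℤ × ℤ → ℝ) (ψ : ℤ × ℤ → ℂ) (E : ℝ)
    (hA : ∀ x y, edge x y → A x y = -A y x)
    (hα : ∀ f x y, edge x y → α f x y = -α f y x)
    (hαflux : ∀ f p : ℤ × ℤ, flux (α f) p = if p = f then 1 else 0)
    (heig : ∀ x ∈ box L, Ham (box L) A ψ x = (E : ℂ) * ψ x)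
    (x y : ℤ × ℤ) (hx : x ∈ box L) (hy : y ∈ box L) (hxy : edge x y) :
    cur A ψ x y
      = (if squareF (edgeFace x y) ⊆ box L then (1 : ℝ) else 0)
          * ((1 / 2) * ∑ x' ∈ box L, ∑ y' ∈ (box L).filter (fun y' => edge x' y'),
              α (edgeFace x y) x' y' * cur A ψ x' y')
        - (if squareF (edgeFace y x) ⊆ box L then (1 : ℝ) else 0)
          * ((1 / 2) * ∑ x' ∈ box L, ∑ y' ∈ (box L).filter (fun y' => edge x' y'),
              α (edgeFace y x) x' y' * cur A ψ x' y') := by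
  have hJ := isCirculation_boxCurrent hA heig
  have flux_derivative : ∀ f, (if squareF f ⊆ box L then (1 : ℝ) else 0)
      * ((1 / 2) * ∑ x' ∈ box L, ∑ y' ∈ (box L).filter (fun y' => edge x' y'),
          α f x' y' * cur A ψ x' y') = stream L (boxCurrent L A ψ) f := by
    intro f
    rw [sum_gauge_mul_cur_eq hA heig (hα f) (hαflux f)]
    split_ifs with hf
    · ring
    · rw [hJ.stream_eq_zero hf, mul_zero, mul_zero, zero_mul]
  rw [flux_derivative, flux_derivative, ← boxCurrent_eq_cur hx hy hxy]
  exact hJ.eq_stream_sub_stream hxy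

/-- current recovery from flux derivatives.  For any family of gauges
`α f` (antisymmetric, with flux `δ_f`), any eigenfunction `ψ` of `H_{Λ_L}(A)` with real
eigenvalue and any directed edge `a = (x,y) ∈ 𝒜_{Λ_L}`,
`J_ψ(a) = c_a ⟨Y_{f_a} H⟩_ψ - c_{ā} ⟨Y_{f_{ā}} H⟩_ψ`, where
`⟨Y_f H⟩_ψ = (1/2) Σ_{a' ∈ 𝒜_Λ} α_f(a') J_ψ(a')` and `c_a = 1` iff `f_a ⊆ Λ_L`. -/
theorem stmt15 (L : ℕ) (hL : 1 ≤ L) (A : ℤ × ℤ → ℤ × ℤ → ℝ)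
    (α : ℤ × ℤ → ℤ × ℤ → ℤ × ℤ → ℝ) (ψ : ℤ × ℤ → ℂ) (E : ℝ)
    (hA : ∀ x y, edge x y → A x y = -A y x)
    (hα : ∀ f x y, edge x y → α f x y = -α f y x)
    (hαflux : ∀ f p : ℤ × ℤ, flux (α f) p = if p = f then 1 else 0)
    (heig : ∀ x ∈ box L, Ham (box L) A ψ x = (E : ℂ) * ψ x)
    (x y : ℤ × ℤ) (hx : x ∈ box L) (hy : y ∈ box L) (hxy : edge x y) :
    cur A ψ x y
      = (if squareF (edgeFace x y) ⊆ box L then (1 : ℝ) else 0)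
          * ((1 / 2) * ∑ x' ∈ box L, ∑ y' ∈ (box L).filter (fun y' => edge x' y'),
              α (edgeFace x y) x' y' * cur A ψ x' y')
        - (if squareF (edgeFace y x) ⊆ box L then (1 : ℝ) else 0)
          * ((1 / 2) * ∑ x' ∈ box L, ∑ y' ∈ (box L).filter (fun y' => edge x' y'),
              α (edgeFace y x) x' y' * cur A ψ x' y') :=
  stmt15_general L A α ψ E hA hα hαflux heig x y hx hy hxy
end

section
/- Trace inequality for second-order perturbations: let H(ω) be a real-analytic family of self-adjoint operators on a finite-dimensional Hilbert space depending on a real parameter ω, with analytically chosen eigenvalues λ_ℓ(ω). Let F be a nondecreasing nonnegative function (e.g. F(x) = ∫_{−∞}^x χ(t)dt for a nonnegative bump χ). Then Tr( (∂²_ω H) F(H) ) ≤ Σ_ℓ (∂²_ω λ_ℓ) F(λ_ℓ). -/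
/-!
Let `U` be the unitary matrix whose columns are the eigenvectors `v_ℓ` and `D = diag λ`, so
`H U = U D`. The matrix `C = Uᴴ U'` is skew-Hermitian (differentiate `Uᴴ U = 1`) and `U' = U C`.
Differentiating `H U = U D` gives `Uᴴ H' U = D' + [C, D]`, whose diagonal is the
Hellmann–Feynman formula `λ'_ℓ = ⟨v_ℓ, H' v_ℓ⟩`. Differentiating that formula once more gives
`λ''_ℓ = ⟨v_ℓ, H'' v_ℓ⟩ + [Uᴴ H' U, C]_ℓℓ`, and the correction term equals
`[[C, D], C]_ℓℓ = 2 Σ_k (λ_ℓ - λ_k) |C_kℓ|²`. Weighting by `F(λ_ℓ)` and symmetrising in `k, ℓ`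
turns the total correction into `Σ_{k,ℓ} (F(λ_ℓ) - F(λ_k)) (λ_ℓ - λ_k) |C_kℓ|² ≥ 0`. Unlike the
textbook formula with denominators `λ_ℓ - λ_k`, this needs no simplicity of the spectrum.
-/

open Matrix

/-- Matrices carry no global norm in Mathlib, so matrix-valued functions are differentiated
entrywise. -/
def HasEntrywiseDerivAt {m n : Type*} (A : ℝ → Matrix m n ℂ) (A' : Matrix m n ℂ) (t : ℝ) :
    Prop :=
  ∀ i j, HasDerivAt (fun s => A s i j) (A' i j) t

namespace HasEntrywiseDerivAt

variable {l m n : Type*} {A : ℝ → Matrix m n ℂ} {A' A₁ A₂ : Matrix m n ℂ} {t : ℝ}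

theorem const (C : Matrix m n ℂ) (t : ℝ) : HasEntrywiseDerivAt (fun _ => C) 0 t :=
  fun i j => hasDerivAt_const t (C i j)

theorem unique (h₁ : HasEntrywiseDerivAt A A₁ t) (h₂ : HasEntrywiseDerivAt A A₂ t) : A₁ = A₂ :=
  Matrix.ext fun i j => (h₁ i j).unique (h₂ i j)

theorem conjTranspose (hA : HasEntrywiseDerivAt A A' t) :
    HasEntrywiseDerivAt (fun s => (A s)ᴴ) A'ᴴ t :=
  fun i j => (hA j i).star

theorem mul [Fintype n] {B : ℝ → Matrix n l ℂ} {B' : Matrix n l ℂ}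
    (hA : HasEntrywiseDerivAt A A' t) (hB : HasEntrywiseDerivAt B B' t) :
    HasEntrywiseDerivAt (fun s => A s * B s) (A' * B t + A t * B') t := by
  intro i k
  simp only [mul_apply, Matrix.add_apply, ← Finset.sum_add_distrib]
  exact HasDerivAt.fun_sum fun j _ => (hA i j).fun_mul (hB j k)

end HasEntrywiseDerivAt

theorem hasEntrywiseDerivAt_diagonal {n : Type*} [DecidableEq n] {d : n → ℝ → ℝ} {d' : n → ℝ}
    {t : ℝ} (hd : ∀ i, HasDerivAt (d i) (d' i) t) :
    HasEntrywiseDerivAt (fun s => diagonal fun i => (d i s : ℂ))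
      (diagonal fun i => (d' i : ℂ)) t := by
  intro i j
  by_cases hij : i = j
  · subst hij
    simpa only [diagonal_apply_eq] using (hd i).ofReal_comp
  · simpa only [diagonal_apply_ne _ hij] using hasDerivAt_const t (0 : ℂ)

theorem hasEntrywiseDerivAt_of_analyticOnNhd {m n : Type*} {A : ℝ → Matrix m n ℂ}
    (hA : ∀ i j, AnalyticOnNhd ℝ (fun s => A s i j) Set.univ) (t : ℝ) :
    HasEntrywiseDerivAt A (of fun i j => deriv (fun s => A s i j) t) t :=
  fun i j => (hA i j t trivial).differentiableAt.hasDerivAt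

section Perturbation

variable {ι : Type*} [Fintype ι] [DecidableEq ι] {H U : ℝ → Matrix ι ι ℂ} {lam : ι → ℝ → ℝ}
  {t : ℝ}

theorem conjTranspose_mul_deriv_antihermitian {U' : Matrix ι ι ℂ}
    (hU : ∀ s, (U s)ᴴ * U s = 1) (hU' : HasEntrywiseDerivAt U U' t) :
    ((U t)ᴴ * U')ᴴ = -((U t)ᴴ * U') := by
  have h : U'ᴴ * U t + (U t)ᴴ * U' = 0 :=
    (hU'.conjTranspose.mul hU').unique (by simpa only [hU] using HasEntrywiseDerivAt.const 1 t)
  rw [conjTranspose_mul, conjTranspose_conjTranspose]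
  exact eq_neg_of_add_eq_zero_left h

theorem conjTranspose_mul_deriv_mul {H' U' : Matrix ι ι ℂ} {lam' : ι → ℝ}
    (hU : ∀ s, (U s)ᴴ * U s = 1) (hHU : ∀ s, H s * U s = U s * diagonal fun ℓ => (lam ℓ s : ℂ))
    (hH' : HasEntrywiseDerivAt H H' t) (hU' : HasEntrywiseDerivAt U U' t)
    (hlam' : ∀ ℓ, HasDerivAt (lam ℓ) (lam' ℓ) t) :
    (U t)ᴴ * H' * U t =
      diagonal (fun ℓ => (lam' ℓ : ℂ)) + ((U t)ᴴ * U' * diagonal (fun ℓ => (lam ℓ t : ℂ)) -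
        diagonal (fun ℓ => (lam ℓ t : ℂ)) * ((U t)ᴴ * U')) := by
  have hderiv : H' * U t + H t * U' =
      U' * diagonal (fun ℓ => (lam ℓ t : ℂ)) + U t * diagonal fun ℓ => (lam' ℓ : ℂ) :=
    (hH'.mul hU').unique (by simpa only [hHU] using hU'.mul (hasEntrywiseDerivAt_diagonal hlam'))
  have hHU' : (U t)ᴴ * H t * U' = diagonal (fun ℓ => (lam ℓ t : ℂ)) * ((U t)ᴴ * U') :=
    calc (U t)ᴴ * H t * U' = (U t)ᴴ * (H t * U t) * ((U t)ᴴ * U') := by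
          simp only [Matrix.mul_assoc, ← Matrix.mul_assoc (U t) (U t)ᴴ,
            mul_eq_one_comm.mp (hU t), Matrix.one_mul]
      _ = _ := by rw [hHU t, ← Matrix.mul_assoc (U t)ᴴ (U t), hU t, Matrix.one_mul]
  calc (U t)ᴴ * H' * U t = (U t)ᴴ * (H' * U t + H t * U') - (U t)ᴴ * H t * U' := by noncomm_ring
    _ = _ := by
      rw [hderiv, hHU', Matrix.mul_add, ← Matrix.mul_assoc, ← Matrix.mul_assoc, hU t,
        Matrix.one_mul]
      abel

theorem conjTranspose_mul_deriv_mul_apply_self {H' U' : Matrix ι ι ℂ} {lam' : ι → ℝ}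
    (hU : ∀ s, (U s)ᴴ * U s = 1) (hHU : ∀ s, H s * U s = U s * diagonal fun ℓ => (lam ℓ s : ℂ))
    (hH' : HasEntrywiseDerivAt H H' t) (hU' : HasEntrywiseDerivAt U U' t)
    (hlam' : ∀ ℓ, HasDerivAt (lam ℓ) (lam' ℓ) t) (ℓ : ι) :
    ((U t)ᴴ * H' * U t) ℓ ℓ = lam' ℓ := by
  rw [conjTranspose_mul_deriv_mul hU hHU hH' hU' hlam']
  simp [mul_diagonal, diagonal_mul, mul_comm]

theorem ofReal_eigenvalue_secondDeriv_eq {H' U' : ℝ → Matrix ι ι ℂ} {lam' : ι → ℝ → ℝ}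
    {H'' : Matrix ι ι ℂ} {lam'' : ι → ℝ}
    (hU : ∀ s, (U s)ᴴ * U s = 1) (hHU : ∀ s, H s * U s = U s * diagonal fun ℓ => (lam ℓ s : ℂ))
    (hH' : ∀ s, HasEntrywiseDerivAt H (H' s) s) (hU' : ∀ s, HasEntrywiseDerivAt U (U' s) s)
    (hlam' : ∀ ℓ s, HasDerivAt (lam ℓ) (lam' ℓ s) s) (hH'' : HasEntrywiseDerivAt H' H'' t)
    (hlam'' : ∀ ℓ, HasDerivAt (lam' ℓ) (lam'' ℓ) t) (ℓ : ι) :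
    (lam'' ℓ : ℂ) = ((U t)ᴴ * H'' * U t) ℓ ℓ +
      ((U t)ᴴ * H' t * U t * ((U t)ᴴ * U' t) - (U t)ᴴ * U' t * ((U t)ᴴ * H' t * U t)) ℓ ℓ := by
  have hsecond := ((hU' t).conjTranspose.mul hH'').mul (hU' t) ℓ ℓ
  have hfirst : (fun s => ((U s)ᴴ * H' s * U s) ℓ ℓ) = fun s => (lam' ℓ s : ℂ) :=
    funext fun s => conjTranspose_mul_deriv_mul_apply_self hU hHU (hH' s) (hU' s) (hlam' · s) ℓ
  rw [hfirst] at hsecond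
  rw [(hlam'' ℓ).ofReal_comp.unique hsecond, ← Matrix.add_apply]
  refine congrArg (fun X : Matrix ι ι ℂ => X ℓ ℓ) ?_
  have hUC : U' t = U t * ((U t)ᴴ * U' t) := by
    rw [← Matrix.mul_assoc, mul_eq_one_comm.mp (hU t), Matrix.one_mul]
  have hUC' : (U' t)ᴴ = -((U t)ᴴ * U' t) * (U t)ᴴ := by
    conv_lhs => rw [hUC]
    rw [conjTranspose_mul, conjTranspose_mul_deriv_antihermitian hU (hU' t)]
  nth_rewrite 2 [hUC]
  rw [hUC']
  noncomm_ring

end Perturbation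

theorem sum_sum_mul_sub_mul_nonneg {ι : Type*} [Fintype ι] {F : ℝ → ℝ} (hF : Monotone F)
    (x : ι → ℝ) {w : ι → ι → ℝ} (hw : ∀ k ℓ, 0 ≤ w k ℓ) (hsymm : ∀ k ℓ, w k ℓ = w ℓ k) :
    0 ≤ ∑ ℓ, ∑ k, F (x ℓ) * ((x ℓ - x k) * w k ℓ) := by
  have htwice : 2 * ∑ ℓ, ∑ k, F (x ℓ) * ((x ℓ - x k) * w k ℓ) =
      ∑ ℓ, ∑ k, (F (x ℓ) - F (x k)) * (x ℓ - x k) * w k ℓ := by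
    rw [two_mul]
    nth_rewrite 2 [Finset.sum_comm]
    simp only [← Finset.sum_add_distrib]
    refine Finset.sum_congr rfl fun ℓ _ => Finset.sum_congr rfl fun k _ => ?_
    rw [hsymm ℓ k]
    ring
  have hterm : ∀ k ℓ, 0 ≤ (F (x ℓ) - F (x k)) * (x ℓ - x k) := fun k ℓ => by
    rcases le_total (x k) (x ℓ) with h | h
    · exact mul_nonneg (sub_nonneg.mpr (hF h)) (sub_nonneg.mpr h)
    · exact mul_nonneg_of_nonpos_of_nonpos (sub_nonpos.mpr (hF h)) (sub_nonpos.mpr h)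
  have : 0 ≤ ∑ ℓ, ∑ k, (F (x ℓ) - F (x k)) * (x ℓ - x k) * w k ℓ :=
    Finset.sum_nonneg fun ℓ _ => Finset.sum_nonneg fun k _ => mul_nonneg (hterm k ℓ) (hw k ℓ)
  linarith

theorem apply_eq_neg_star_apply_of_conjTranspose_eq_neg {ι : Type*} {C : Matrix ι ι ℂ}
    (hC : Cᴴ = -C) (i j : ι) : C i j = -star (C j i) := by
  have h := congrArg (· i j) hC
  simp only [conjTranspose_apply, Matrix.neg_apply] at h
  rw [h, neg_neg]

section Commutator

variable {ι : Type*} [Fintype ι] [DecidableEq ι] {C : Matrix ι ι ℂ}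

theorem commutator_diagonal_commutator_apply_self (hC : Cᴴ = -C) (lam : ι → ℝ) (ℓ : ι) :
    ((C * diagonal (fun i => (lam i : ℂ)) - diagonal (fun i => (lam i : ℂ)) * C) * C -
        C * (C * diagonal (fun i => (lam i : ℂ)) - diagonal (fun i => (lam i : ℂ)) * C)) ℓ ℓ =
      ↑(∑ k, (lam ℓ - lam k) * (2 * Complex.normSq (C k ℓ))) := by
  set D := diagonal fun i => (lam i : ℂ)
  have hexpand : (C * D - D * C) * C - C * (C * D - D * C) =
      C * D * C + C * D * C - D * (C * C) - C * C * D := by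
    noncomm_ring
  have hCDC : (C * D * C) ℓ ℓ = ∑ k, C ℓ k * lam k * C k ℓ := by
    rw [Matrix.mul_apply]
    simp only [D, mul_diagonal]
  rw [hexpand, Matrix.sub_apply, Matrix.sub_apply, Matrix.add_apply, diagonal_mul, mul_diagonal,
    hCDC, Matrix.mul_apply, Finset.mul_sum, Finset.sum_mul, ← Finset.sum_add_distrib,
    ← Finset.sum_sub_distrib, ← Finset.sum_sub_distrib, Complex.ofReal_sum]
  refine Finset.sum_congr rfl fun k _ => ?_
  rw [apply_eq_neg_star_apply_of_conjTranspose_eq_neg hC ℓ k, Complex.ofReal_mul,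
    Complex.ofReal_mul, Complex.normSq_eq_conj_mul_self, Complex.star_def]
  push_cast
  ring

theorem sum_mul_re_commutator_nonneg {F : ℝ → ℝ} (hF : Monotone F) (hC : Cᴴ = -C)
    {lam : ι → ℝ} {d : ι → ℂ} {M : Matrix ι ι ℂ}
    (hM : M = diagonal d +
      (C * diagonal (fun i => (lam i : ℂ)) - diagonal (fun i => (lam i : ℂ)) * C)) :
    0 ≤ ∑ ℓ, F (lam ℓ) * ((M * C - C * M) ℓ ℓ).re := by
  have hsplit : M * C - C * M = (diagonal d * C - C * diagonal d) +
      ((C * diagonal (fun i => (lam i : ℂ)) - diagonal (fun i => (lam i : ℂ)) * C) * C -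
        C * (C * diagonal (fun i => (lam i : ℂ)) - diagonal (fun i => (lam i : ℂ)) * C)) := by
    rw [hM]
    noncomm_ring
  have hdiag : ∀ ℓ, (diagonal d * C - C * diagonal d) ℓ ℓ = 0 := fun ℓ => by
    simp [diagonal_mul, mul_diagonal, mul_comm]
  simp only [hsplit, Matrix.add_apply, hdiag, zero_add,
    commutator_diagonal_commutator_apply_self hC, Complex.ofReal_re, Finset.mul_sum]
  refine sum_sum_mul_sub_mul_nonneg hF lam (w := fun k ℓ => 2 * Complex.normSq (C k ℓ))
    (fun k ℓ => mul_nonneg zero_le_two (Complex.normSq_nonneg _)) fun k ℓ => ?_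
  rw [apply_eq_neg_star_apply_of_conjTranspose_eq_neg hC k ℓ, Complex.normSq_neg,
    Complex.star_def, Complex.normSq_conj]

end Commutator

theorem sum_mul_re_conjTranspose_mul_mul_le {ι : Type*} [Fintype ι] [DecidableEq ι]
    {H U H' U' : ℝ → Matrix ι ι ℂ} {lam lam' : ι → ℝ → ℝ} {H'' : Matrix ι ι ℂ} {lam'' : ι → ℝ}
    {F : ℝ → ℝ} {t : ℝ} (hF : Monotone F)
    (hU : ∀ s, (U s)ᴴ * U s = 1) (hHU : ∀ s, H s * U s = U s * diagonal fun ℓ => (lam ℓ s : ℂ))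
    (hH' : ∀ s, HasEntrywiseDerivAt H (H' s) s) (hU' : ∀ s, HasEntrywiseDerivAt U (U' s) s)
    (hlam' : ∀ ℓ s, HasDerivAt (lam ℓ) (lam' ℓ s) s) (hH'' : HasEntrywiseDerivAt H' H'' t)
    (hlam'' : ∀ ℓ, HasDerivAt (lam' ℓ) (lam'' ℓ) t) :
    ∑ ℓ, F (lam ℓ t) * (((U t)ᴴ * H'' * U t) ℓ ℓ).re ≤ ∑ ℓ, lam'' ℓ * F (lam ℓ t) := by
  have hsecond : ∀ ℓ, lam'' ℓ = (((U t)ᴴ * H'' * U t) ℓ ℓ).re +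
      (((U t)ᴴ * H' t * U t * ((U t)ᴴ * U' t) - (U t)ᴴ * U' t * ((U t)ᴴ * H' t * U t)) ℓ ℓ).re :=
    fun ℓ => by
      simpa using congrArg Complex.re
        (ofReal_eigenvalue_secondDeriv_eq hU hHU hH' hU' hlam' hH'' hlam'' ℓ)
  have hnonneg := sum_mul_re_commutator_nonneg hF
    (conjTranspose_mul_deriv_antihermitian hU (hU' t))
    (conjTranspose_mul_deriv_mul hU hHU (hH' t) (hU' t) (hlam' · t))
  rw [← sub_nonneg, ← Finset.sum_sub_distrib]
  convert hnonneg using 2 with ℓ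
  rw [hsecond ℓ]
  ring

section Columns

variable {ι : Type*} [Fintype ι] (v : ι → ι → ℂ)

theorem conjTranspose_of_mul_mul_of_apply (A : Matrix ι ι ℂ) (k ℓ : ι) :
    ((of fun i j => v j i)ᴴ * A * of fun i j => v j i) k ℓ = star (v k) ⬝ᵥ A *ᵥ v ℓ :=
  mul_mul_apply _ _ _ _ _

theorem conjTranspose_of_mul_of_eq_one [DecidableEq ι]
    (hv : ∀ k ℓ, star (v k) ⬝ᵥ v ℓ = if k = ℓ then 1 else 0) :
    (of fun i j => v j i)ᴴ * of (fun i j => v j i) = 1 := by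
  ext k ℓ
  rw [← Matrix.mul_one (of fun i j => v j i)ᴴ, conjTranspose_of_mul_mul_of_apply, one_mulVec,
    one_apply]
  exact hv k ℓ

theorem mul_eq_mul_diagonal_of_mulVec_eq_smul [DecidableEq ι] {A : Matrix ι ι ℂ} {lam : ι → ℝ}
    (hv : ∀ ℓ, A *ᵥ v ℓ = lam ℓ • v ℓ) :
    A * of (fun i j => v j i) = of (fun i j => v j i) * diagonal fun ℓ => (lam ℓ : ℂ) := by
  ext i ℓ
  rw [mul_diagonal, mul_comm]
  simpa [mulVec, dotProduct, mul_apply] using congrFun (hv ℓ) i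

end Columns

theorem stmt17_general (n : ℕ) (H : ℝ → Matrix (Fin n) (Fin n) ℂ)
    (lam : Fin n → ℝ → ℝ) (v : Fin n → ℝ → (Fin n → ℂ)) (F : ℝ → ℝ)
    (hH : ∀ i j, AnalyticOn ℝ (fun ω => H ω i j) Set.univ)
    (hlam : ∀ ℓ, AnalyticOn ℝ (lam ℓ) Set.univ)
    (hv : ∀ ℓ i, AnalyticOn ℝ (fun ω => v ℓ ω i) Set.univ)
    (heig : ∀ ω ℓ, (H ω).mulVec (v ℓ ω) = lam ℓ ω • v ℓ ω)
    (horth : ∀ ω k ℓ, star (v k ω) ⬝ᵥ v ℓ ω = if k = ℓ then 1 else 0)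
    (hF : Monotone F) (ω : ℝ) :
    (∑ ℓ, (F (lam ℓ ω) : ℂ) *
        (star (v ℓ ω) ⬝ᵥ
          (Matrix.of fun i j => deriv (deriv (fun t => H t i j)) ω).mulVec (v ℓ ω))).re
      ≤ ∑ ℓ, deriv (deriv (lam ℓ)) ω * F (lam ℓ ω) := by
  have hHa := fun i j => analyticOn_univ.mp (hH i j)
  have hlama := fun ℓ => analyticOn_univ.mp (hlam ℓ)
  have key := sum_mul_re_conjTranspose_mul_mul_le (t := ω) hF
    (fun s => conjTranspose_of_mul_of_eq_one (v · s) (horth s))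
    (fun s => mul_eq_mul_diagonal_of_mulVec_eq_smul (v · s) (heig s))
    (hasEntrywiseDerivAt_of_analyticOnNhd hHa)
    (hasEntrywiseDerivAt_of_analyticOnNhd fun i ℓ => analyticOn_univ.mp (hv ℓ i))
    (fun ℓ s => (hlama ℓ s trivial).differentiableAt.hasDerivAt)
    (hasEntrywiseDerivAt_of_analyticOnNhd (A := fun s => of fun i j => deriv (fun s => H s i j) s)
      (fun i j => (hHa i j).deriv) ω)
    (fun ℓ => ((hlama ℓ).deriv ω trivial).differentiableAt.hasDerivAt)
  rw [Complex.re_sum]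
  convert key using 2 with ℓ
  rw [Complex.re_ofReal_mul, conjTranspose_of_mul_mul_of_apply (v · ω)]
  rfl

/-- trace inequality for second-order perturbations.  Let `H(ω)` be a
real-analytic family of Hermitian matrices with real-analytic eigenvalues `λ_ℓ(ω)` and
orthonormal eigenvectors `v_ℓ(ω)`, and let `F` be nondecreasing and nonnegative.  Then
`Tr((∂²_ω H) F(H)) ≤ Σ_ℓ (∂²_ω λ_ℓ) F(λ_ℓ)`, where (by the spectral decomposition
`F(H) = Σ_ℓ F(λ_ℓ) |v_ℓ⟩⟨v_ℓ|`) the left side equals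
`Σ_ℓ F(λ_ℓ) ⟨v_ℓ, (∂²_ω H) v_ℓ⟩`. -/
theorem stmt17 (n : ℕ) (H : ℝ → Matrix (Fin n) (Fin n) ℂ)
    (lam : Fin n → ℝ → ℝ) (v : Fin n → ℝ → (Fin n → ℂ)) (F : ℝ → ℝ)
    (hherm : ∀ ω, (H ω).IsHermitian)
    (hH : ∀ i j, AnalyticOn ℝ (fun ω => H ω i j) Set.univ)
    (hlam : ∀ ℓ, AnalyticOn ℝ (lam ℓ) Set.univ)
    (hv : ∀ ℓ i, AnalyticOn ℝ (fun ω => v ℓ ω i) Set.univ)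
    (heig : ∀ ω ℓ, (H ω).mulVec (v ℓ ω) = lam ℓ ω • v ℓ ω)
    (horth : ∀ ω k ℓ, star (v k ω) ⬝ᵥ v ℓ ω = if k = ℓ then 1 else 0)
    (hF : Monotone F) (hF0 : ∀ x, 0 ≤ F x) (ω : ℝ) :
    (∑ ℓ, (F (lam ℓ ω) : ℂ) *
        (star (v ℓ ω) ⬝ᵥ
          (Matrix.of fun i j => deriv (deriv (fun t => H t i j)) ω).mulVec (v ℓ ω))).re
      ≤ ∑ ℓ, deriv (deriv (lam ℓ)) ω * F (lam ℓ ω) :=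
  stmt17_general n H lam v F hH hlam hv heig horth hF ω
end
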